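/- The vector fields X_e = ∂_{ζ^0} + 𝜁̃_0 ∂_σ, X_f (the explicit vector field with components as given below), and X_h = 2ζ^0 ∂_{ζ^0} + ζ^a ∂_{ζ^a} - 𝜁̃_0 ∂_{𝜁̃_0} + σ ∂_σ + ρ ∂_ρ - t^a ∂_{t^a} - b^a ∂_{b^a} on the manifold 𝑁̄ with type IIA coordinates satisfy the commutation relations [X_e, X_f] = -X_h, [X_h, X_e] = -2 X_e, [X_h, X_f] = 2 X_f. Here X_f = (2ρh⁻¹ - (ζ^0)²)∂_{ζ^0} + (2ρh⁻¹b^a - ζ^0ζ^a)∂_{ζ^a} + (k_{abc}/2)(ζ^bζ^c - 2b^bb^cρh⁻¹)∂_{𝜁̃_a} + ((1/2)(σ + ζ^i𝜁̃_i) + (k_{abc}/3)ρh⁻¹b^ab^bb^c)∂_{𝜁̃_0} + ζ^0 t^a ∂_{t^a} + (ζ^0 b^a - ζ^a)∂_{b^a} - ζ^0 ρ ∂_ρ + [2ρh⁻¹(-𝜁̃_0 - b^a𝜁̃_a - k_{abc}((b^ab^bζ^c)/2 - (b^ab^bb^cζ^0)/6)) - (ζ^0/2)(σ - 𝜁̃_iζ^i)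 + (k_{abc}/6)ζ^aζ^bζ^c]∂_σ, where h = h(t) = (1/6)k_{abc}t^at^bt^c. -/

import Mathlib

open Finset

noncomputable section

/-- the coordinate space of `𝑁̄` in type IIA variables:
`(b, t, ρ, ζ⁰, ζᵃ, ζ̃₀, ζ̃ₐ, σ)`. -/
abbrev QSpace (n : ℕ) :=
  (Fin n → ℝ) × (Fin n → ℝ) × ℝ × ℝ × (Fin n → ℝ) × ℝ × (Fin n → ℝ) × ℝ

/-- the cubic polynomial `h(t) = (1/6) k_{abc} tᵃ tᵇ tᶜ`. -/
def cubic {n : ℕ} (k : Fin n → Fin n → Fin n → ℝ) (t : Fin n → ℝ) : ℝ :=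
  (1/6) * ∑ a, ∑ b, ∑ c, k a b c * t a * t b * t c

/-- Lie bracket of vector fields on `QSpace n` in coordinates:
`[X,Y](p) = DY(p)[X(p)] - DX(p)[Y(p)]`. -/
def VLie {n : ℕ} (X Y : QSpace n → QSpace n) : QSpace n → QSpace n :=
  fun p => fderiv ℝ Y p (X p) - fderiv ℝ X p (Y p)

/-- `X_e = ∂_{ζ⁰} + ζ̃₀ ∂_σ`. -/
def Xe {n : ℕ} : QSpace n → QSpace n :=
  fun (_, _, _, _, _, ζt₀, _, _) => (0, 0, 0, 1, 0, 0, 0, ζt₀)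

/-- `X_h = 2ζ⁰∂_{ζ⁰} + ζᵃ∂_{ζᵃ} - ζ̃₀∂_{ζ̃₀} + σ∂_σ + ρ∂_ρ - tᵃ∂_{tᵃ} - bᵃ∂_{bᵃ}`. -/
def Xh {n : ℕ} : QSpace n → QSpace n :=
  fun (b, t, ρ, ζ₀, ζ, ζt₀, _, σ) =>
    (-b, -t, ρ, 2*ζ₀, ζ, -ζt₀, 0, σ)

/-- the "hidden" S-duality vector field `X_f` in type IIA variables. -/
def Xf {n : ℕ} (k : Fin n → Fin n → Fin n → ℝ) : QSpace n → QSpace n :=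
  fun (b, t, ρ, ζ₀, ζ, ζt₀, ζt, σ) =>
    (fun a => ζ₀ * b a - ζ a,
     fun a => ζ₀ * t a,
     -ζ₀ * ρ,
     2*ρ/cubic k t - ζ₀^2,
     fun a => 2*ρ/cubic k t * b a - ζ₀ * ζ a,
     (1/2)*(σ + (ζ₀*ζt₀ + ∑ a, ζ a * ζt a))
       + (ρ/cubic k t) * (1/3) * ∑ a, ∑ b', ∑ c, k a b' c * b a * b b' * b c,
     fun a => (1/2) * ∑ b', ∑ c, k a b' c * (ζ b' * ζ c - 2 * b b' * b c * ρ/cubic k t),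
     2*ρ/cubic k t *
        (-ζt₀ - (∑ a, b a * ζt a)
          - ∑ a, ∑ b', ∑ c, k a b' c *
              (b a * b b' * ζ c/2 - b a * b b' * b c * ζ₀/6))
       - ζ₀/2 * (σ - (ζ₀*ζt₀ + ∑ a, ζ a * ζt a))
       + (1/6) * ∑ a, ∑ b', ∑ c, k a b' c * ζ a * ζ b' * ζ c)

/-!
`Xe` and `Xh` are affine, so their derivatives are read off directly. `Xe p` is the velocity
of the line `s ↦ p + s • Xe p`, along which `Xf` is a quadratic polynomial in `s`. `Xh` is the
velocity at `c = 1` of the weighted dilation `dilate c`, and `Xf` has weight `2` for it: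
`Xf (dilate c p) = c² • dilate c (Xf p)`, because `h` has weight `-3`. Differentiating
these two identities gives `fderiv Xf p` in the directions `Xe p` and `Xh p`, and hence the
three brackets.
-/

theorem fderiv_apply_eq_of_hasDerivAt_comp {E F : Type*} [NormedAddCommGroup E]
    [NormedSpace ℝ E] [NormedAddCommGroup F] [NormedSpace ℝ F] {f : E → F} {γ : ℝ → E}
    {t : ℝ} {p v : E} {w : F} (hγ : HasDerivAt γ v t) (hγt : γ t = p)
    (hf : DifferentiableAt ℝ f p) (h : HasDerivAt (f ∘ γ) w t) :
    fderiv ℝ f p v = w := by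
  subst hγt
  exact (hf.hasFDerivAt.comp_hasDerivAt t hγ).unique h

theorem fderiv_apply_eq_of_add_smul_eq {E F : Type*} [NormedAddCommGroup E] [NormedSpace ℝ E]
    [NormedAddCommGroup F] [NormedSpace ℝ F] {f : E → F} {p v : E} {w u : F}
    (hf : DifferentiableAt ℝ f p) (h : ∀ s : ℝ, f (p + s • v) = f p + s • w - s ^ 2 • u) :
    fderiv ℝ f p v = w := by
  have hline : HasDerivAt (fun s : ℝ => p + s • v) v 0 := by
    simpa using ((hasDerivAt_id (0 : ℝ)).smul_const v).const_add p
  have hquad : HasDerivAt (fun s : ℝ => f p + s • w - s ^ 2 • u) w 0 := by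
    simpa using (((hasDerivAt_id (0 : ℝ)).smul_const w).const_add (f p)).fun_sub
      ((hasDerivAt_pow 2 (0 : ℝ)).smul_const u)
  exact fderiv_apply_eq_of_hasDerivAt_comp hline (by simp) hf
    (hquad.congr_of_eventuallyEq (.of_forall fun s => h s))

section

variable {ι : Type*} [Fintype ι]

theorem sum_smul_mul (c : ℝ) (x y : ι → ℝ) : ∑ a, (c • x) a * y a = c * ∑ a, x a * y a := by
  simp only [Pi.smul_apply, smul_eq_mul, Finset.mul_sum, mul_assoc]

theorem sum_sum_mul_smul_mul_smul (f : ι → ι → ℝ) (c₁ c₂ : ℝ) (x y : ι → ℝ) :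
    ∑ a, ∑ b, f a b * (c₁ • x) a * (c₂ • y) b = c₁ * c₂ * ∑ a, ∑ b, f a b * x a * y b := by
  simp only [Pi.smul_apply, smul_eq_mul, Finset.mul_sum]
  exact Finset.sum_congr rfl fun a _ => Finset.sum_congr rfl fun b _ => by ring

theorem sum_sum_sum_mul_smul_mul_smul_mul_smul (f : ι → ι → ι → ℝ) (c₁ c₂ c₃ : ℝ)
    (x y z : ι → ℝ) :
    ∑ a, ∑ b, ∑ d, f a b d * (c₁ • x) a * (c₂ • y) b * (c₃ • z) d =
      c₁ * c₂ * c₃ * ∑ a, ∑ b, ∑ d, f a b d * x a * y b * z d := by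
  simp only [Pi.smul_apply, smul_eq_mul, Finset.mul_sum]
  exact Finset.sum_congr rfl fun a _ => Finset.sum_congr rfl fun b _ =>
    Finset.sum_congr rfl fun d _ => by ring

end

section

variable {n : ℕ}

@[fun_prop]
theorem differentiable_cubic (k : Fin n → Fin n → Fin n → ℝ) : Differentiable ℝ (cubic k) := by
  unfold cubic
  fun_prop

theorem cubic_smul (k : Fin n → Fin n → Fin n → ℝ) (c : ℝ) (t : Fin n → ℝ) :
    cubic k (c • t) = c ^ 3 * cubic k t := by
  simp only [cubic, sum_sum_sum_mul_smul_mul_smul_mul_smul]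
  ring

theorem differentiableAt_Xf (k : Fin n → Fin n → Fin n → ℝ) {p : QSpace n}
    (hp : cubic k p.2.1 ≠ 0) : DifferentiableAt ℝ (Xf k) p := by
  obtain ⟨b, t, ρ, ζ₀, ζ, ζt₀, ζt, σ⟩ := p
  unfold Xf
  simp only [div_eq_mul_inv]
  fun_prop (disch := exact hp)

theorem fderiv_Xh (p v : QSpace n) : fderiv ℝ Xh p v = Xh v := by
  refine fderiv_apply_eq_of_add_smul_eq (u := 0) (by unfold Xh; fun_prop) fun s => ?_
  obtain ⟨b, t, ρ, ζ₀, ζ, ζt₀, ζt, σ⟩ := p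
  obtain ⟨b', t', ρ', ζ₀', ζ', ζt₀', ζt', σ'⟩ := v
  simp only [Xh, Prod.mk_add_mk, Prod.smul_mk, smul_zero, sub_zero, Prod.mk.injEq]
  refine ⟨?_, ?_, ?_, ?_, ?_, ?_, ?_, ?_⟩ <;> first | module | ring | simp

theorem fderiv_Xe (p v : QSpace n) : fderiv ℝ Xe p v = Xe v - Xe 0 := by
  refine fderiv_apply_eq_of_add_smul_eq (u := 0) (by unfold Xe; fun_prop) fun s => ?_
  obtain ⟨b, t, ρ, ζ₀, ζ, ζt₀, ζt, σ⟩ := p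
  obtain ⟨b', t', ρ', ζ₀', ζ', ζt₀', ζt', σ'⟩ := v
  simp [Xe]

theorem Xf_add_smul_Xe (k : Fin n → Fin n → Fin n → ℝ) (p : QSpace n) (s : ℝ) :
    Xf k (p + s • Xe p) = Xf k p + s • (Xe (Xf k p) - Xe 0 - Xh p) - s ^ 2 • Xe 0 := by
  obtain ⟨b, t, ρ, ζ₀, ζ, ζt₀, ζt, σ⟩ := p
  simp only [Xf, Xe, Xh, Prod.mk_add_mk, Prod.smul_mk, Prod.mk_sub_mk, Prod.mk.injEq, smul_zero,
    add_zero, smul_eq_mul, mul_sub, Finset.sum_sub_distrib, mul_div_assoc', ← mul_assoc,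
    ← Finset.sum_div, ← Finset.sum_mul]
  refine ⟨?_, ?_, ?_, ?_, ?_, ?_, ?_, ?_⟩ <;>
    (try funext a; simp only [Pi.add_apply, Pi.sub_apply, Pi.smul_apply, Pi.neg_apply,
      Pi.zero_apply, smul_eq_mul]) <;> ring

def dilate (c : ℝ) : QSpace n → QSpace n :=
  fun (b, t, ρ, ζ₀, ζ, ζt₀, ζt, σ) =>
    (c⁻¹ • b, c⁻¹ • t, c * ρ, c ^ 2 * ζ₀, c • ζ, c⁻¹ * ζt₀, ζt, c * σ)

@[simp]
theorem dilate_one (p : QSpace n) : dilate 1 p = p := by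
  simp [dilate]

theorem hasDerivAt_dilate (p : QSpace n) : HasDerivAt (fun c => dilate c p) (Xh p) 1 := by
  obtain ⟨b, t, ρ, ζ₀, ζ, ζt₀, ζt, σ⟩ := p
  have hinv : HasDerivAt (fun c : ℝ => c⁻¹) (-1) 1 := by
    simpa using hasDerivAt_inv (one_ne_zero (α := ℝ))
  have hid : HasDerivAt (fun c : ℝ => c) 1 1 := hasDerivAt_id 1
  simp only [dilate, Xh]
  refine .prodMk ?_ <| .prodMk ?_ <| .prodMk ?_ <| .prodMk ?_ <| .prodMk ?_ <| .prodMk ?_ <|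
    .prodMk (hasDerivAt_const _ _) ?_
  · simpa using hinv.smul_const b
  · simpa using hinv.smul_const t
  · simpa using hid.mul_const ρ
  · simpa using (hasDerivAt_pow 2 (1 : ℝ)).mul_const ζ₀
  · simpa using hid.smul_const ζ
  · simpa using hinv.mul_const ζt₀
  · simpa using hid.mul_const σ

theorem Xf_dilate (k : Fin n → Fin n → Fin n → ℝ) {c : ℝ} (hc : c ≠ 0) (p : QSpace n) :
    Xf k (dilate c p) = c ^ 2 • dilate c (Xf k p) := by
  obtain ⟨b, t, ρ, ζ₀, ζ, ζt₀, ζt, σ⟩ := p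
  -- two passes, so that the triple sums are rescaled before their inner double sums
  simp only [Xf, dilate, cubic_smul, Prod.smul_mk, Prod.mk.injEq, mul_sub,
    Finset.sum_sub_distrib, mul_div_assoc', ← mul_assoc, ← Finset.sum_div, ← Finset.sum_mul,
    sum_sum_sum_mul_smul_mul_smul_mul_smul]
  simp only [sum_sum_mul_smul_mul_smul, sum_smul_mul, smul_eq_mul]
  refine ⟨?_, ?_, ?_, ?_, ?_, ?_, ?_, ?_⟩ <;>
    (try funext a; simp only [Pi.smul_apply, smul_eq_mul]) <;> field_simp

theorem fderiv_Xf_Xe (k : Fin n → Fin n → Fin n → ℝ) {p : QSpace n} (hp : cubic k p.2.1 ≠ 0) :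
    fderiv ℝ (Xf k) p (Xe p) = Xe (Xf k p) - Xe 0 - Xh p :=
  fderiv_apply_eq_of_add_smul_eq (differentiableAt_Xf k hp) (Xf_add_smul_Xe k p)

theorem fderiv_Xf_Xh (k : Fin n → Fin n → Fin n → ℝ) {p : QSpace n} (hp : cubic k p.2.1 ≠ 0) :
    fderiv ℝ (Xf k) p (Xh p) = Xh (Xf k p) + (2 : ℝ) • Xf k p := by
  have hweight : HasDerivAt (fun c : ℝ => c ^ 2 • dilate c (Xf k p))
      (Xh (Xf k p) + (2 : ℝ) • Xf k p) 1 := by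
    simpa using (hasDerivAt_pow 2 (1 : ℝ)).fun_smul (hasDerivAt_dilate (Xf k p))
  refine fderiv_apply_eq_of_hasDerivAt_comp (hasDerivAt_dilate p) (dilate_one p)
    (differentiableAt_Xf k hp) (hweight.congr_of_eventuallyEq ?_)
  filter_upwards [eventually_ne_nhds one_ne_zero] with c hc using Xf_dilate k hc p

theorem VLie_Xe_Xf (k : Fin n → Fin n → Fin n → ℝ) {p : QSpace n} (hp : cubic k p.2.1 ≠ 0) :
    VLie Xe (Xf k) p = -Xh p := by
  simp only [VLie, fderiv_Xf_Xe k hp, fderiv_Xe]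
  abel

theorem VLie_Xh_Xe (p : QSpace n) : VLie Xh Xe p = (-2 : ℝ) • Xe p := by
  obtain ⟨b, t, ρ, ζ₀, ζ, ζt₀, ζt, σ⟩ := p
  simp [VLie, fderiv_Xh, fderiv_Xe, Xe, Xh, two_mul, sub_eq_add_neg]

theorem VLie_Xh_Xf (k : Fin n → Fin n → Fin n → ℝ) {p : QSpace n} (hp : cubic k p.2.1 ≠ 0) :
    VLie Xh (Xf k) p = (2 : ℝ) • Xf k p := by
  simp only [VLie, fderiv_Xf_Xh k hp, fderiv_Xh]
  abel

end

theorem stmt_7_general {n : ℕ} (k : Fin n → Fin n → Fin n → ℝ) :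
    ∀ p : QSpace n, 0 < cubic k p.2.1 →
      VLie Xe (Xf k) p = -Xh p ∧
      VLie Xh Xe p = (-2 : ℝ) • Xe p ∧
      VLie Xh (Xf k) p = (2 : ℝ) • Xf k p :=
  fun p hp => ⟨VLie_Xe_Xf k hp.ne', VLie_Xh_Xe p, VLie_Xh_Xf k hp.ne'⟩

/-- the infinitesimal S-duality vector fields `X_e`, `X_f`, `X_h`
satisfy `[X_e,X_f] = -X_h`, `[X_h,X_e] = -2X_e`, `[X_h,X_f] = 2X_f`
(on the locus where `h(t) > 0`), i.e. they span a subalgebra anti-isomorphic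
to `𝔰𝔩(2,ℝ)`. -/
theorem stmt_7 {n : ℕ} (k : Fin n → Fin n → Fin n → ℝ)
    (hsymm : ∀ a b c, k a b c = k b a c ∧ k a b c = k a c b) :
    ∀ p : QSpace n, 0 < cubic k p.2.1 →
      VLie Xe (Xf k) p = -Xh p ∧
      VLie Xh Xe p = (-2 : ℝ) • Xe p ∧
      VLie Xh (Xf k) p = (2 : ℝ) • Xf k p :=
  stmt_7_general k

end
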